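/- arXiv:1610.00522 — 4 statements merged into one kernel-verified Lean document; each statement's English description precedes it below -/
import Mathlib

section
/- For H ∈ (0,1), define σ²(t) = 2∫_0^t ∫_0^x e^{-x-y}(x^{2H} + y^{2H} - (x-y)^{2H}) dy dx. Then σ²(t) = Γ(2H+1, t)(1 - 2e^{-t}) + e^{-2t} Γ*(2H+1, t), where Γ(a,t) = ∫_0^t x^{a-1} e^{-x} dx is the lower incomplete gamma function and Γ*(a,t) = ∫_0^t x^{a-1} e^{x} dx. -/
/-!
Write `G t = ∫₀ᵗ f x e^{-x} dx` and `K t = ∫₀ᵗ f x e^{x} dx`. Splitting the kernel and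
substituting `y ↦ x - y` in the term `f (x - y)` expresses the inner integral through `f x`,
`G x` and `K x`; this expression is exactly half the derivative of
`G t (1 - 2e^{-t}) + e^{-2t} K t`, which vanishes at `0`, so the fundamental theorem of calculus
gives the identity for every continuous `f`, in particular for `f x = x ^ (2H)`.
-/

open MeasureTheory intervalIntegral Real

section

variable {f : ℝ → ℝ}

theorem integral_exp_neg_mul_comp_sub_left (x : ℝ) :
    ∫ y in (0 : ℝ)..x, exp (-y) * f (x - y) = exp (-x) * ∫ y in (0 : ℝ)..x, f y * exp y := by
  have hreflect : ∀ y, exp (-y) * f (x - y) = exp (-x) * (f (x - y) * exp (x - y)) := fun y => by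
    rw [exp_sub, exp_neg, exp_neg]
    field_simp
  simp_rw [hreflect, intervalIntegral.integral_const_mul,
    integral_comp_sub_left (fun u => f u * exp u) x, sub_self, sub_zero]

theorem integral_exp_neg_sub_mul_add_sub (hf : Continuous f) (x : ℝ) :
    ∫ y in (0 : ℝ)..x, exp (-x - y) * (f x + f y - f (x - y)) =
      exp (-x) * (f x * (1 - exp (-x)) + (∫ y in (0 : ℝ)..x, f y * exp (-y)) -
        exp (-x) * ∫ y in (0 : ℝ)..x, f y * exp y) := by
  have hsplit : ∀ y, exp (-x - y) * (f x + f y - f (x - y)) =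
      exp (-x) * (f x * exp (-y) + f y * exp (-y) - exp (-y) * f (x - y)) := fun y => by
    rw [sub_eq_add_neg, exp_add]
    ring
  have hexp : Continuous fun y : ℝ => exp (-y) := by fun_prop
  have hconst : IntervalIntegrable (fun y => f x * exp (-y)) volume 0 x :=
    (continuous_const.mul hexp).intervalIntegrable 0 x
  have hdiag : IntervalIntegrable (fun y => f y * exp (-y)) volume 0 x :=
    (hf.mul hexp).intervalIntegrable 0 x
  have hrefl : IntervalIntegrable (fun y => exp (-y) * f (x - y)) volume 0 x :=
    (hexp.mul (hf.comp (continuous_const.sub continuous_id))).intervalIntegrable 0 x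
  have hintegral_exp_neg : ∫ y in (0 : ℝ)..x, exp (-y) = 1 - exp (-x) := by
    simp [integral_comp_neg (fun y => exp y), integral_exp]
  simp_rw [hsplit, intervalIntegral.integral_const_mul, integral_sub (hconst.add hdiag) hrefl,
    integral_add hconst hdiag, intervalIntegral.integral_const_mul, hintegral_exp_neg,
    integral_exp_neg_mul_comp_sub_left]

theorem hasDerivAt_integral_mul_exp_neg_add_exp_mul_integral (hf : Continuous f) (u : ℝ) :
    HasDerivAt (fun t => (∫ x in (0 : ℝ)..t, f x * exp (-x)) * (1 - 2 * exp (-t)) +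
        exp (-2 * t) * ∫ x in (0 : ℝ)..t, f x * exp x)
      (2 * (exp (-u) * (f u * (1 - exp (-u)) + (∫ y in (0 : ℝ)..u, f y * exp (-y)) -
        exp (-u) * ∫ y in (0 : ℝ)..u, f y * exp y))) u := by
  have hG : HasDerivAt (fun t => ∫ x in (0 : ℝ)..t, f x * exp (-x)) (f u * exp (-u)) u :=
    (Continuous.integral_hasStrictDerivAt (f := fun x => f x * exp (-x)) (by fun_prop) 0
      u).hasDerivAt
  have hK : HasDerivAt (fun t => ∫ x in (0 : ℝ)..t, f x * exp x) (f u * exp u) u :=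
    (Continuous.integral_hasStrictDerivAt (f := fun x => f x * exp x) (by fun_prop) 0 u).hasDerivAt
  have hexp_neg : HasDerivAt (fun v => exp (-v)) (-exp (-u)) u := by
    simpa using (hasDerivAt_neg u).exp
  have hexp_neg_two : HasDerivAt (fun v => exp (-2 * v)) (-2 * exp (-2 * u)) u := by
    simpa [mul_comm] using ((hasDerivAt_id u).const_mul (-2)).exp
  refine ((hG.mul ((hexp_neg.const_mul 2).const_sub 1)).add (hexp_neg_two.mul hK)).congr_deriv ?_
  have hexp_two : exp (-2 * u) = exp (-u) * exp (-u) := by rw [← exp_add]; ring_nf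
  have hexp_cancel : exp (-u) * exp u = 1 := by rw [← exp_add]; simp
  linear_combination (f u * exp u - 2 * ∫ x in (0 : ℝ)..u, f x * exp x) * hexp_two +
    f u * exp (-u) * hexp_cancel

theorem two_mul_integral_integral_exp_neg_sub_mul_add_sub (hf : Continuous f) (t : ℝ) :
    2 * ∫ x in (0 : ℝ)..t, ∫ y in (0 : ℝ)..x, exp (-x - y) * (f x + f y - f (x - y)) =
      (∫ x in (0 : ℝ)..t, f x * exp (-x)) * (1 - 2 * exp (-t)) +
        exp (-2 * t) * ∫ x in (0 : ℝ)..t, f x * exp x := by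
  have hprimitive : ∀ {g : ℝ → ℝ}, Continuous g → Continuous fun u => ∫ y in (0 : ℝ)..u, g y :=
    fun hg => continuous_primitive (fun _ _ => hg.intervalIntegrable _ _) 0
  have hderiv_cont : Continuous fun u => 2 * (exp (-u) * (f u * (1 - exp (-u)) +
      (∫ y in (0 : ℝ)..u, f y * exp (-y)) - exp (-u) * ∫ y in (0 : ℝ)..u, f y * exp y)) := by
    have := hprimitive (hf.mul (continuous_exp.comp continuous_neg))
    have := hprimitive (hf.mul continuous_exp)
    fun_prop
  rw [← intervalIntegral.integral_const_mul]
  simp_rw [integral_exp_neg_sub_mul_add_sub hf]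
  rw [integral_eq_sub_of_hasDerivAt
    (fun u _ => hasDerivAt_integral_mul_exp_neg_add_exp_mul_integral hf u)
    (hderiv_cont.intervalIntegrable 0 t)]
  simp

end

theorem variance_discounted_integrated_fbm_general
    (H : ℝ) (hH : H ∈ Set.Ioo (0 : ℝ) 1) (t : ℝ) :
    2 * ∫ x in (0 : ℝ)..t, ∫ y in (0 : ℝ)..x,
        Real.exp (-x - y) * (x ^ (2 * H) + y ^ (2 * H) - (x - y) ^ (2 * H)) =
      (∫ x in (0 : ℝ)..t, x ^ (2 * H + 1 - 1) * Real.exp (-x)) * (1 - 2 * Real.exp (-t)) +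
        Real.exp (-2 * t) * ∫ x in (0 : ℝ)..t, x ^ (2 * H + 1 - 1) * Real.exp x := by
  have hrpow : Continuous fun x : ℝ => x ^ (2 * H) :=
    continuous_id.rpow_const fun _ => Or.inr (by linarith [hH.1])
  rw [add_sub_cancel_right]
  exact two_mul_integral_integral_exp_neg_sub_mul_add_sub hrpow t

theorem variance_discounted_integrated_fbm
    (H : ℝ) (hH : H ∈ Set.Ioo (0 : ℝ) 1) (t : ℝ) (ht : 0 ≤ t) :
    2 * ∫ x in (0 : ℝ)..t, ∫ y in (0 : ℝ)..x,
        Real.exp (-x - y) * (x ^ (2 * H) + y ^ (2 * H) - (x - y) ^ (2 * H)) =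
      (∫ x in (0 : ℝ)..t, x ^ (2 * H + 1 - 1) * Real.exp (-x)) * (1 - 2 * Real.exp (-t)) +
        Real.exp (-2 * t) * ∫ x in (0 : ℝ)..t, x ^ (2 * H + 1 - 1) * Real.exp x :=
  variance_discounted_integrated_fbm_general H hH t
end

section
/- Let σ: (0,∞) → (0,∞) be differentiable at S with σ(S) > 0, let c ≥ 0 and δ̃: (0,∞) → R be differentiable at S. Define g_u(t) = (u + c δ̃(t)) / σ(t). Then for every fixed x > 0, with S_x(u) = S - x/u², one has lim_{u→∞} (g_u(S)² - g_u(S_x(u))²) = -2 σ'(S) x / σ(S)³. -/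
open Filter

lemma key_slope (φ : ℝ → ℝ) (φ' S x : ℝ) (hx : 0 < x) (h : HasDerivAt φ φ' S) :
    Tendsto (fun u : ℝ => u ^ 2 * (φ S - φ (S - x / u ^ 2))) atTop (nhds (φ' * x)) := by
  have hm : Tendsto (fun u : ℝ => S - x / u ^ 2) atTop (nhdsWithin S {S}ᶜ) := by
    apply tendsto_nhdsWithin_of_tendsto_nhds_of_eventually_within
    · have h0 : Tendsto (fun u : ℝ => x / u ^ 2) atTop (nhds 0) :=
        Tendsto.div_atTop tendsto_const_nhds (tendsto_pow_atTop (by norm_num))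
      simpa using tendsto_const_nhds.sub h0
    · filter_upwards [eventually_gt_atTop 0] with u hu
      have : 0 < x / u ^ 2 := div_pos hx (by positivity)
      simp only [Set.mem_compl_iff, Set.mem_singleton_iff]
      intro hcon
      nlinarith
  have hs := hasDerivAt_iff_tendsto_slope.mp h
  have hcomp := (hs.comp hm).const_mul x
  rw [mul_comm] at hcomp
  apply Tendsto.congr' _ hcomp
  filter_upwards [eventually_gt_atTop 0] with u hu
  have hu2 : (u : ℝ) ^ 2 ≠ 0 := by positivity
  simp only [Function.comp, slope_def_field]
  rw [show S - x / u ^ 2 - S = -(x / u ^ 2) by ring,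
    show φ (S - x / u ^ 2) - φ S = -(φ S - φ (S - x / u ^ 2)) by ring,
    neg_div_neg_eq, div_div_eq_mul_div, mul_comm x, div_mul_cancel₀ _ hx.ne', mul_comm]

theorem ruin_time_scaling_limit
    (σ dtil : ℝ → ℝ) (σ' : ℝ) (S c x : ℝ)
    (hS : 0 < S) (hc : 0 ≤ c) (hx : 0 < x)
    (hσpos : ∀ t, 0 < t → 0 < σ t)
    (hσ : HasDerivAt σ σ' S)
    (hdtil : DifferentiableAt ℝ dtil S) :
    Tendsto
      (fun u : ℝ =>
        ((u + c * dtil S) / σ S) ^ 2 -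
          ((u + c * dtil (S - x / u ^ 2)) / σ (S - x / u ^ 2)) ^ 2)
      atTop (nhds (-2 * σ' * x / (σ S) ^ 3)) := by
  have hsS : 0 < σ S := hσpos S hS
  have hsne : σ S ≠ 0 := hsS.ne'
  have hs2ne : σ S ^ 2 ≠ 0 := pow_ne_zero 2 hsne
  -- φ₁ = (σ t ^ 2)⁻¹
  have hφ1 : HasDerivAt (fun t => (σ t ^ 2)⁻¹) (-(2 * σ S ^ 1 * σ') / (σ S ^ 2) ^ 2) S :=
    (hσ.pow 2).inv hs2ne
  have h1 := key_slope _ _ S x hx hφ1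
  -- φ₂ = c * dtil t / σ t ^ 2
  have hφ2d : DifferentiableAt ℝ (fun t => c * dtil t / σ t ^ 2) S :=
    ((differentiableAt_const c).mul hdtil).div ((hσ.differentiableAt).pow 2) hs2ne
  have h2 := key_slope _ _ S x hx hφ2d.hasDerivAt
  have h2inv : Tendsto (fun u : ℝ => 2 / u) atTop (nhds 0) :=
    Tendsto.div_atTop tendsto_const_nhds tendsto_id
  have h2' := h2inv.mul h2
  rw [zero_mul] at h2'
  -- φ₃ = (c * dtil t / σ t) ^ 2, continuous at S
  have hmn : Tendsto (fun u : ℝ => S - x / u ^ 2) atTop (nhds S) := by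
    have h0 : Tendsto (fun u : ℝ => x / u ^ 2) atTop (nhds 0) :=
      Tendsto.div_atTop tendsto_const_nhds (tendsto_pow_atTop (by norm_num))
    simpa using tendsto_const_nhds.sub h0
  have hφ3c : ContinuousAt (fun t => (c * dtil t / σ t) ^ 2) S :=
    ((((continuousAt_const.mul hdtil.continuousAt).div hσ.continuousAt hsne)).pow 2)
  have h3 : Tendsto (fun u : ℝ => (c * dtil S / σ S) ^ 2 -
      (c * dtil (S - x / u ^ 2) / σ (S - x / u ^ 2)) ^ 2) atTop (nhds 0) := by
    have hcomp : Tendsto (fun u : ℝ =>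
        (c * dtil (S - x / u ^ 2) / σ (S - x / u ^ 2)) ^ 2) atTop
        (nhds ((c * dtil S / σ S) ^ 2)) := hφ3c.tendsto.comp hmn
    have h := (tendsto_const_nhds (α := ℝ) (x := (c * dtil S / σ S) ^ 2) (f := atTop)).sub hcomp
    rw [sub_self] at h
    exact h
  have hsum := (h1.add h2').add h3
  rw [add_zero, add_zero] at hsum
  have hlim : -(2 * σ S ^ 1 * σ') / (σ S ^ 2) ^ 2 * x = -2 * σ' * x / σ S ^ 3 := by
    field_simp
  rw [hlim] at hsum
  apply Tendsto.congr' _ hsum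
  filter_upwards [eventually_gt_atTop 0] with u hu
  have hune : u ≠ 0 := hu.ne'
  have key : ∀ a s : ℝ, ((u + a) / s) ^ 2 =
      u ^ 2 * (s ^ 2)⁻¹ + 2 * u * (a / s ^ 2) + (a / s) ^ 2 := by
    intro a s
    rw [div_pow, div_pow]
    rw [show (u + a) ^ 2 = u ^ 2 + 2 * u * a + a ^ 2 by ring]
    rw [add_div, add_div]
    ring
  rw [key (c * dtil S) (σ S), key (c * dtil (S - x / u ^ 2)) (σ (S - x / u ^ 2))]
  have h2u : ∀ z : ℝ, 2 / u * (u ^ 2 * z) = 2 * u * z := by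
    intro z
    field_simp
  rw [h2u]
  ring
end

section
/- Under the conditions above (σ differentiable with σ'(s) > 0 on [S,θ], σ(S) > 0, δ continuous, c > 0), σ_{X_u}(S) = 1 and for all sufficiently large u, σ_{X_u}(s) > 1 for all s ∈ (S, θ]. -/
open MeasureTheory intervalIntegral

/-- discounted time `δ̃(t) = ∫_0^t e^{-δ(s)} ds` -/
noncomputable def dtil (δ : ℝ → ℝ) (t : ℝ) : ℝ := ∫ s in (0 : ℝ)..t, Real.exp (-δ s)

/-- standard deviation of the rescaled process `X_u` -/
noncomputable def sigmaX (σ δ : ℝ → ℝ) (c S u s : ℝ) : ℝ :=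
  σ s / σ S * ((u + c * dtil δ S) / (u + c * dtil δ s))

theorem sigmaX_eventually_gt_one
    (σ σ' δ : ℝ → ℝ) (c S θ : ℝ)
    (hS : 0 < S) (hSθ : S < θ) (hc : 0 < c)
    (hδcont : Continuous δ)
    (hσ : ∀ s ∈ Set.Icc S θ, HasDerivAt σ (σ' s) s)
    (hσpos : ∀ s ∈ Set.Icc S θ, 0 < σ s)
    (hσ'pos : ∀ s ∈ Set.Icc S θ, 0 < σ' s) :
    (∀ u : ℝ, 0 < u → sigmaX σ δ c S u S = 1) ∧
    ∃ u₀ : ℝ, ∀ u : ℝ, u₀ ≤ u → ∀ s ∈ Set.Ioc S θ, 1 < sigmaX σ δ c S u s := by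
  have hexp : Continuous fun x : ℝ => Real.exp (-δ x) := (hδcont.neg).rexp
  have hSmem : S ∈ Set.Icc S θ := ⟨le_refl _, hSθ.le⟩
  have hσS : 0 < σ S := hσpos S hSmem
  have hdS_pos : 0 < dtil δ S := by
    apply intervalIntegral.intervalIntegral_pos_of_pos_on
      (hexp.intervalIntegrable 0 S) (fun x _ => Real.exp_pos _) hS
  have hd_nonneg : ∀ t : ℝ, 0 ≤ t → 0 ≤ dtil δ t := fun t ht =>
    intervalIntegral.integral_nonneg ht (fun x _ => (Real.exp_pos _).le)
  constructor
  · intro u hu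
    have h1 : σ S / σ S = 1 := div_self hσS.ne'
    have h2 : (u + c * dtil δ S) / (u + c * dtil δ S) = 1 :=
      div_self (by positivity)
    simp [sigmaX, h1, h2]
  -- bound on the exponential on [S, θ]
  obtain ⟨C, hC⟩ := (isCompact_Icc (a := S) (b := θ)).exists_bound_of_continuousOn
    hexp.continuousOn
  have hCpos : 0 < C := lt_of_lt_of_le (Real.exp_pos (-δ S)) (by
    simpa using hC S hSmem)
  -- continuity of σ on Icc
  have hσcont : ∀ x ∈ Set.Icc S θ, ContinuousAt σ x := fun x hx => (hσ x hx).continuousAt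
  -- σ strictly monotone on Icc
  have hmono : StrictMonoOn σ (Set.Icc S θ) := by
    apply strictMonoOn_of_deriv_pos (convex_Icc S θ)
      (fun x hx => (hσcont x hx).continuousWithinAt)
    intro x hx
    rw [interior_Icc] at hx
    have hx' : x ∈ Set.Icc S θ := Set.Ioo_subset_Icc_self hx
    rw [(hσ x hx').deriv]
    exact hσ'pos x hx'
  -- the slope function
  set φ : ℝ → ℝ := fun x => if x = S then σ' S else (σ x - σ S) / (x - S) with hφdef
  have hφcont : ContinuousOn φ (Set.Icc S θ) := by
    intro a ha
    rcases eq_or_ne a S with rfl | hne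
    · rw [← continuousWithinAt_diff_self]
      have hslope : Filter.Tendsto (slope σ a) (nhdsWithin a {a}ᶜ) (nhds (σ' a)) :=
        hasDerivAt_iff_tendsto_slope.1 (hσ a ha)
      have hle : nhdsWithin a (Set.Icc a θ \ {a}) ≤ nhdsWithin a {a}ᶜ :=
        nhdsWithin_mono a (fun x hx => hx.2)
      have : Filter.Tendsto φ (nhdsWithin a (Set.Icc a θ \ {a})) (nhds (σ' a)) := by
        apply (hslope.mono_left hle).congr'
        filter_upwards [self_mem_nhdsWithin] with x hx
        have hxne : x ≠ a := hx.2
        simp [hφdef, hxne, slope_def_field, div_eq_div_iff]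
      simpa [hφdef, ContinuousWithinAt] using this
    · apply ContinuousAt.continuousWithinAt
      have hg : ContinuousAt (fun x => (σ x - σ S) / (x - S)) a := by
        exact (((hσcont a ha).sub continuousAt_const).div
          (continuousAt_id.sub continuousAt_const) (sub_ne_zero.2 hne))
      apply hg.congr
      filter_upwards [eventually_ne_nhds hne] with x hx
      simp [hφdef, hx]
  have hφpos : ∀ x ∈ Set.Icc S θ, 0 < φ x := by
    intro x hx
    rcases eq_or_ne x S with rfl | hne
    · simpa [hφdef] using hσ'pos x hx
    · have hxS : S < x := lt_of_le_of_ne hx.1 (Ne.symm hne)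
      have : σ S < σ x := hmono hSmem hx hxS
      simp only [hφdef, if_neg hne]
      exact div_pos (sub_pos.2 this) (sub_pos.2 hxS)
  obtain ⟨x₀, hx₀mem, hx₀min⟩ := (isCompact_Icc (a := S) (b := θ)).exists_isMinOn
    ⟨S, hSmem⟩ hφcont
  set m := φ x₀ with hm
  have hmpos : 0 < m := hφpos x₀ hx₀mem
  have hslope_lb : ∀ s ∈ Set.Ioc S θ, m * (s - S) ≤ σ s - σ S := by
    intro s hs
    have hsS : S < s := hs.1
    have h1 : m ≤ φ s := hx₀min ⟨hsS.le, hs.2⟩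
    rw [hφdef] at h1
    simp only [if_neg hsS.ne'] at h1
    calc m * (s - S) ≤ (σ s - σ S) / (s - S) * (s - S) := by
          apply mul_le_mul_of_nonneg_right h1 (sub_pos.2 hsS).le
      _ = σ s - σ S := div_mul_cancel₀ _ (sub_pos.2 hsS).ne'
  -- bound on dtil increments
  have hdtil_ub : ∀ s ∈ Set.Ioc S θ, dtil δ s - dtil δ S ≤ C * (s - S) := by
    intro s hs
    have hint : dtil δ s - dtil δ S = ∫ x in S..s, Real.exp (-δ x) := by
      rw [dtil, dtil, ← intervalIntegral.integral_add_adjacent_intervals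
        (hexp.intervalIntegrable 0 S) (hexp.intervalIntegrable S s)]
      ring
    rw [hint]
    calc (∫ x in S..s, Real.exp (-δ x)) ≤ ∫ _x in S..s, C := by
          apply intervalIntegral.integral_mono_on hs.1.le
            (hexp.intervalIntegrable S s) (intervalIntegrable_const)
          intro x hx
          have : |Real.exp (-δ x)| ≤ C := by
            simpa using hC x ⟨hx.1, hx.2.trans hs.2⟩
          exact (le_abs_self _).trans this
      _ = C * (s - S) := by rw [intervalIntegral.integral_const, smul_eq_mul]; ring
  refine ⟨max 1 (c * σ S * C / m), fun u hu s hs => ?_⟩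
  have hu1 : (1 : ℝ) ≤ u := le_trans (le_max_left _ _) hu
  have hupos : 0 < u := lt_of_lt_of_le one_pos hu1
  have hu2 : c * σ S * C / m ≤ u := le_trans (le_max_right _ _) hu
  have hu2' : c * σ S * C ≤ u * m := by
    rw [div_le_iff₀ hmpos] at hu2; linarith
  have hsS : S < s := hs.1
  have hsmem : s ∈ Set.Icc S θ := ⟨hsS.le, hs.2⟩
  have hσs : 0 < σ s := hσpos s hsmem
  have hds_nonneg : 0 ≤ dtil δ s := hd_nonneg s (hS.trans hsS).le
  have hden : 0 < u + c * dtil δ s := by positivity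
  -- key inequality
  have hkey : σ S * (u + c * dtil δ s) < σ s * (u + c * dtil δ S) := by
    have h1 : m * (s - S) ≤ σ s - σ S := hslope_lb s hs
    have h2 : dtil δ s - dtil δ S ≤ C * (s - S) := hdtil_ub s hs
    have h3 : c * σ S * (dtil δ s - dtil δ S) ≤ c * σ S * (C * (s - S)) := by
      apply mul_le_mul_of_nonneg_left h2 (by positivity)
    have h4 : c * σ S * C * (s - S) ≤ u * m * (s - S) := by
      apply mul_le_mul_of_nonneg_right hu2' (sub_pos.2 hsS).le
    have h5 : u * (m * (s - S)) ≤ u * (σ s - σ S) := by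
      apply mul_le_mul_of_nonneg_left h1 hupos.le
    have h6 : 0 < c * dtil δ S * (σ s - σ S) := by
      have : σ S < σ s := hmono hSmem hsmem hsS
      have h7 : 0 < c * dtil δ S := by positivity
      exact mul_pos h7 (sub_pos.2 this)
    nlinarith
  -- conclude
  rw [sigmaX, div_mul_div_comm]
  rw [lt_div_iff₀ (by positivity)]
  linarith
end

section
/- Let Ψ be the standard normal tail, a_u → ∞, and suppose h_u: [0,∞) → R is measurable with h_u(x) → -∞ pointwise (hence P(N > h_u(x)) → 1) for each x ≥ 0, and 0 ≤ P(N > h_u(x)) ≤ 1. Then (1/(√(2π) a_u)) e^{-a_u²/2} ∫_0^∞ P(N > h_u(x)) e^{-x²/(2a_u²) - x} dx ~ Ψ(a_u) as u → ∞. -/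
open MeasureTheory ProbabilityTheory Filter

/-- tail of the standard normal distribution -/
noncomputable def gaussTail (x : ℝ) : ℝ := ((gaussianReal 0 1) (Set.Ioi x)).toReal

/-!
Substituting `t = a + x / a` in `Ψ(a) = ∫_a^∞ φ(t) dt` gives
`Ψ(a) = φ(a) / a * ∫_0^∞ exp (-x² / (2a²) - x) dx`, so the ratio in question is a quotient of two
integrals of the same shape, the numerator carrying the extra factor `Ψ(h_u(x)) ∈ [0, 1]`. As
`a → ∞` both integrands are dominated by `exp (-x)` and converge pointwise to `exp (-x)`, because
`Ψ(h_u(x)) → 1`; hence both integrals tend to `∫_0^∞ exp (-x) dx = 1`.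
-/

open Real Set Topology

lemma gaussTail_nonneg (x : ℝ) : 0 ≤ gaussTail x := ENNReal.toReal_nonneg

lemma gaussTail_le_one (x : ℝ) : gaussTail x ≤ 1 :=
  ENNReal.toReal_le_of_le_ofReal zero_le_one (by simpa using prob_le_one)

lemma gaussTail_antitone : Antitone gaussTail := fun _ _ hxy =>
  ENNReal.toReal_mono (measure_ne_top _ _) (measure_mono (Ioi_subset_Ioi hxy))

lemma measurable_gaussTail : Measurable gaussTail := gaussTail_antitone.measurable

lemma tendsto_gaussTail_atBot : Tendsto gaussTail atBot (𝓝 1) := by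
  have hIci : Tendsto (fun y => gaussianReal 0 1 (Ici (y + 1))) atBot (𝓝 1) := by
    simpa [Function.comp_def] using (tendsto_measure_Ici_atBot (gaussianReal 0 1)).comp
      (tendsto_atBot_add_const_right atBot 1 tendsto_id)
  have hIoi : Tendsto (fun y => gaussianReal 0 1 (Ioi y)) atBot (𝓝 1) :=
    tendsto_of_tendsto_of_tendsto_of_le_of_le hIci tendsto_const_nhds
      (fun y => measure_mono fun _ ht => (lt_add_one y).trans_le ht) fun _ => prob_le_one
  exact (ENNReal.tendsto_toReal ENNReal.one_ne_top).comp hIoi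

lemma integral_Ioi_comp_add_mul {E : Type*} [NormedAddCommGroup E] [NormedSpace ℝ E]
    (g : ℝ → E) (c : ℝ) {b : ℝ} (hb : 0 < b) :
    ∫ x in Ioi 0, g (c + b * x) = b⁻¹ • ∫ t in Ioi c, g t := by
  have htranslate : ∫ y in Ioi 0, g (c + y) = ∫ t in Ioi c, g t := by
    rw [← integral_indicator measurableSet_Ioi, ← integral_indicator measurableSet_Ioi,
      ← integral_add_left_eq_self (indicator (Ioi c) g) c]
    congr 1 with y
    simp [indicator]
  simpa [htranslate] using integral_comp_mul_left_Ioi (fun y => g (c + y)) 0 hb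

lemma gaussianPDFReal_add_inv_mul {a : ℝ} (ha : a ≠ 0) (x : ℝ) :
    gaussianPDFReal 0 1 (a + a⁻¹ * x) =
      (√(2 * π))⁻¹ * exp (-a ^ 2 / 2) * exp (-x ^ 2 / (2 * a ^ 2) - x) := by
  simp only [gaussianPDFReal, NNReal.coe_one, mul_one, sub_zero]
  rw [mul_assoc, ← exp_add]
  congr 2
  field_simp
  ring

lemma gaussTail_eq_mul_integral {a : ℝ} (ha : 0 < a) :
    gaussTail a = 1 / (√(2 * π) * a) * exp (-a ^ 2 / 2) *
      ∫ x in Ioi 0, exp (-x ^ 2 / (2 * a ^ 2) - x) := by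
  have hpdf : gaussTail a = ∫ t in Ioi a, gaussianPDFReal 0 1 t := by
    rw [gaussTail, gaussianReal_apply_eq_integral 0 one_ne_zero, ENNReal.toReal_ofReal]
    exact setIntegral_nonneg measurableSet_Ioi fun x _ => gaussianPDFReal_nonneg _ _ _
  have hsubst := integral_Ioi_comp_add_mul (gaussianPDFReal 0 1) a (inv_pos.mpr ha)
  simp_rw [gaussianPDFReal_add_inv_mul ha.ne', integral_const_mul, inv_inv, smul_eq_mul] at hsubst
  rw [hpdf, ← inv_mul_cancel_left₀ ha.ne' (∫ t in Ioi a, _), ← hsubst]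
  ring

lemma tendsto_setIntegral_Ioi_mul_exp {ι : Type*} {l : Filter ι} [l.IsCountablyGenerated]
    {a : ι → ℝ} {g : ι → ℝ → ℝ} {f : ℝ → ℝ} (ha : Tendsto a l atTop)
    (hg_meas : ∀ i, AEStronglyMeasurable (g i) (volume.restrict (Ioi 0)))
    (hg_le : ∀ i x, ‖g i x‖ ≤ 1) (hg : ∀ x, 0 < x → Tendsto (fun i => g i x) l (𝓝 (f x))) :
    Tendsto (fun i => ∫ x in Ioi 0, g i x * exp (-x ^ 2 / (2 * a i ^ 2) - x)) l
      (𝓝 (∫ x in Ioi 0, f x * exp (-x))) := by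
  have hweight_le (i : ι) (x : ℝ) : exp (-x ^ 2 / (2 * a i ^ 2) - x) ≤ exp (-x) := by
    gcongr
    rw [neg_div]
    linarith [div_nonneg (sq_nonneg x) (by positivity : (0 : ℝ) ≤ 2 * a i ^ 2)]
  have hweight_lim (x : ℝ) :
      Tendsto (fun i => exp (-x ^ 2 / (2 * a i ^ 2) - x)) l (𝓝 (exp (-x))) := by
    have hsq : Tendsto (fun i => 2 * a i ^ 2) l atTop :=
      ((tendsto_pow_atTop two_ne_zero).comp ha).const_mul_atTop two_pos
    simpa using ((tendsto_const_nhds (x := -x ^ 2)).div_atTop hsq).sub_const x |>.rexp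
  refine tendsto_integral_filter_of_dominated_convergence (fun x => exp (-x))
    (Eventually.of_forall fun i => (hg_meas i).mul (by fun_prop))
    (Eventually.of_forall fun i => ae_of_all _ fun x => ?_)
    (by simpa using (exp_neg_integrableOn_Ioi 0 one_pos).integrable) ?_
  · rw [norm_mul, norm_of_nonneg (exp_pos _).le]
    exact (mul_le_of_le_one_left (exp_pos _).le (hg_le i x)).trans (hweight_le i x)
  · filter_upwards [ae_restrict_mem measurableSet_Ioi] with x hx
    exact (hg x hx).mul (hweight_lim x)

theorem tail_integral_asymptotic
    (a : ℝ → ℝ) (h : ℝ → ℝ → ℝ)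
    (ha : Tendsto a atTop atTop)
    (hmeas : ∀ u, Measurable (h u))
    (hdiv : ∀ x : ℝ, 0 ≤ x → Tendsto (fun u => h u x) atTop atBot) :
    Tendsto
      (fun u =>
        (1 / (Real.sqrt (2 * Real.pi) * a u) * Real.exp (-(a u) ^ 2 / 2) *
          ∫ x in Set.Ioi (0 : ℝ),
            gaussTail (h u x) * Real.exp (-x ^ 2 / (2 * (a u) ^ 2) - x)) /
        gaussTail (a u))
      atTop (nhds 1) := by
  have hnum := tendsto_setIntegral_Ioi_mul_exp (g := fun u x => gaussTail (h u x)) ha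
    (fun u => (measurable_gaussTail.comp (hmeas u)).aestronglyMeasurable)
    (fun _ _ => by simpa [abs_of_nonneg (gaussTail_nonneg _)] using gaussTail_le_one _)
    (fun x hx => tendsto_gaussTail_atBot.comp (hdiv x hx.le))
  have hden := tendsto_setIntegral_Ioi_mul_exp (g := fun _ _ => 1) (f := fun _ => 1) ha
    (fun _ => aestronglyMeasurable_const) (fun _ _ => norm_one.le) (fun _ _ => tendsto_const_nhds)
  simp only [one_mul, integral_exp_neg_Ioi_zero] at hnum hden
  refine (div_one (1 : ℝ) ▸ hnum.div hden one_ne_zero).congr' ?_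
  filter_upwards [ha.eventually_gt_atTop 0] with u hu
  have hconst : 0 < 1 / (√(2 * π) * a u) * exp (-a u ^ 2 / 2) := by positivity
  rw [gaussTail_eq_mul_integral hu, mul_div_mul_left _ _ hconst.ne', Pi.div_apply]
end
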